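/- If G is a simple graph with n ≥ 2 vertices and m edges, then the largest signless Laplacian eigenvalue satisfies q(G) ≤ 2m/(n−1) + n − 2. -/

import Mathlib

/-!
Let `Q v = μ v` with `v ≠ 0` and let `d` be the degree vector. As `Q` is nonnegative and
symmetric, `|μ| ⟪d, |v|⟫ ≤ ⟪d, Q |v|⟫ = ⟪Q d, |v|⟫`, and `(Q d)_u = d_u ^ 2 + ∑_{w ∼ u} d_w`.
Double counting bounds the neighbour degree sum by `2m - d_u`, by `d_u (n - 1)` and by
`m + d_u (d_u - 1) / 2`, and together these give `(Q d)_u ≤ (2m / (n - 1) + n - 2) d_u`.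
So `|μ|` is at most the bound unless `⟪d, |v|⟫ = 0`, and then `v` lives on isolated vertices
and `μ = 0`.
-/

open Finset

def Snk (n k : ℕ) : SimpleGraph (Fin n) where
  Adj i j := i ≠ j ∧ (i.val < k ∨ j.val < k)
  symm := ⟨fun i j h => ⟨h.1.symm, h.2.symm⟩⟩
  loopless := ⟨fun i h => h.1 rfl⟩

instance SnkDec (n k : ℕ) : DecidableRel (Snk n k).Adj :=
  fun i j => inferInstanceAs (Decidable (i ≠ j ∧ (i.val < k ∨ j.val < k)))

def signlessLaplacian {n : ℕ} (G : SimpleGraph (Fin n)) [DecidableRel G.Adj] :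
    Matrix (Fin n) (Fin n) ℝ :=
  Matrix.diagonal (fun i => (G.degree i : ℝ)) + G.adjMatrix ℝ

noncomputable def qIndex {n : ℕ} (G : SimpleGraph (Fin n)) [DecidableRel G.Adj] : ℝ :=
  sSup (spectrum ℝ (signlessLaplacian G))

def HasPathOn {V : Type*} (G : SimpleGraph V) (m : ℕ) : Prop :=
  ∃ f : Fin m → V, Function.Injective f ∧
    ∀ (i : ℕ) (h : i + 1 < m), G.Adj (f ⟨i, by omega⟩) (f ⟨i + 1, h⟩)

def HasCycleOn {V : Type*} (G : SimpleGraph V) (m : ℕ) : Prop :=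
  ∃ f : ZMod m → V, Function.Injective f ∧ ∀ i, G.Adj (f i) (f (i + 1))

namespace Matrix

variable {ι : Type*} [Fintype ι]

theorem exists_mulVec_eq_smul_of_mem_spectrum {K : Type*} [Field K] [DecidableEq ι]
    {A : Matrix ι ι K} {μ : K} (hμ : μ ∈ spectrum K A) :
    ∃ v ≠ 0, A *ᵥ v = μ • v := by
  rw [← spectrum_toLin', ← Module.End.hasEigenvalue_iff_mem_spectrum] at hμ
  obtain ⟨v, hv, hv0⟩ := hμ.exists_hasEigenvector
  exact ⟨v, hv0, by simpa using Module.End.mem_eigenspace_iff.1 hv⟩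

theorem abs_smul_abs_le_mulVec_abs {M : Matrix ι ι ℝ} (hM : ∀ i j, 0 ≤ M i j) {μ : ℝ}
    {v : ι → ℝ} (hv : M *ᵥ v = μ • v) : |μ| • |v| ≤ M *ᵥ |v| := fun i =>
  calc |μ| * |v i| = |∑ j, M i j * v j| := by
        rw [← abs_mul, ← smul_eq_mul, ← Pi.smul_apply, ← hv]; rfl
    _ ≤ ∑ j, |M i j * v j| := abs_sum_le_sum_abs _ _
    _ = (M *ᵥ |v|) i := by
        simp only [abs_mul, abs_of_nonneg (hM i _)]; rfl

theorem abs_le_of_vecMul_le_smul {M : Matrix ι ι ℝ} (hM : ∀ i j, 0 ≤ M i j) {w : ι → ℝ}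
    (hw : 0 ≤ w) {K : ℝ} (hwM : w ᵥ* M ≤ K • w) {μ : ℝ} {v : ι → ℝ}
    (hv : M *ᵥ v = μ • v) (hpos : 0 < w ⬝ᵥ |v|) : |μ| ≤ K := by
  refine le_of_mul_le_mul_right ?_ hpos
  calc |μ| * (w ⬝ᵥ |v|) = w ⬝ᵥ (|μ| • |v|) := by rw [dotProduct_smul, smul_eq_mul]
    _ ≤ w ⬝ᵥ (M *ᵥ |v|) :=
        dotProduct_le_dotProduct_of_nonneg_left (abs_smul_abs_le_mulVec_abs hM hv) hw
    _ = (w ᵥ* M) ⬝ᵥ |v| := dotProduct_mulVec _ _ _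
    _ ≤ (K • w) ⬝ᵥ |v| := dotProduct_le_dotProduct_of_nonneg_right hwM (abs_nonneg v)
    _ = K * (w ⬝ᵥ |v|) := by rw [smul_dotProduct, smul_eq_mul]

end Matrix

/-- After eliminating `m` the claim says that a convex piecewise linear function of `S`, with its
break at `S = t ^ 2`, is nonnegative on `[0, t * (n - 1)]`. It is so at the break point because
`(n - 1 - t) * (n - 2 - t) ≥ 0` for integers, and at both ends. -/
theorem Int.sub_one_mul_sq_add_le {n t S m : ℤ} (ht : 1 ≤ t) (htn : t < n) (hS0 : 0 ≤ S)
    (hS : S + t ≤ t * n) (hSt : S + t ≤ 2 * m) (hS2 : 2 * S + t ≤ 2 * m + t ^ 2) :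
    (n - 1) * (t ^ 2 + S) ≤ t * (2 * m + (n - 2) * (n - 1)) := by
  obtain rfl | htn := (Int.add_one_le_of_lt htn).eq_or_lt
  · nlinarith
  have hgap : 0 ≤ n - 1 - t := by linarith
  have hgap' : 0 ≤ n - 2 - t := by linarith
  rcases le_total S (t ^ 2) with hSt2 | hSt2
  · nlinarith [mul_nonneg (mul_nonneg (sub_nonneg.2 hSt2) (by linarith : (0 : ℤ) ≤ n - 2))
        hgap, mul_nonneg hS0 (mul_nonneg hgap hgap')]
  · nlinarith [mul_nonneg (by linarith : (0 : ℤ) ≤ t * (n - 1) - S) hgap',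
      mul_nonneg (sub_nonneg.2 hSt2) (by linarith : (0 : ℤ) ≤ t - 1)]

namespace SimpleGraph

variable {V : Type*} [Fintype V] (G : SimpleGraph V) [DecidableRel G.Adj]

theorem sum_degree_neighborFinset_add_degree_le_mul (u : V) :
    ∑ v ∈ G.neighborFinset u, G.degree v + G.degree u ≤ G.degree u * Fintype.card V := by
  calc ∑ v ∈ G.neighborFinset u, G.degree v + G.degree u
      = ∑ v ∈ G.neighborFinset u, (G.degree v + 1) := by
        rw [sum_add_distrib, sum_const, smul_eq_mul, mul_one, card_neighborFinset_eq_degree]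
    _ ≤ ∑ v ∈ G.neighborFinset u, Fintype.card V :=
        sum_le_sum fun v _ => G.degree_lt_card_verts v
    _ = G.degree u * Fintype.card V := by
        rw [sum_const, smul_eq_mul, card_neighborFinset_eq_degree]

variable [DecidableEq V]

theorem sum_degree_neighborFinset_add_degree_le (u : V) :
    ∑ v ∈ G.neighborFinset u, G.degree v + G.degree u ≤ 2 * #G.edgeFinset := by
  calc ∑ v ∈ G.neighborFinset u, G.degree v + G.degree u
      = ∑ v ∈ insert u (G.neighborFinset u), G.degree v := by
        rw [sum_insert (G.notMem_neighborFinset_self u), add_comm]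
    _ ≤ ∑ v, G.degree v := sum_le_sum_of_subset (subset_univ _)
    _ = 2 * #G.edgeFinset := G.sum_degrees_eq_twice_card_edges

/-- `∑_{v ∼ u} d(v)` counts pairs `v ∼ w` with `v ∈ N(u)`. At most `d(u) (d(u) - 1)` of them have
`w ∈ N(u)`; the others are also counted by `∑_{w ∉ N(u)} d(w) = 2m - ∑_{v ∼ u} d(v)`. -/
theorem two_mul_sum_degree_neighborFinset_add_degree_le (u : V) :
    2 * ∑ v ∈ G.neighborFinset u, G.degree v + G.degree u ≤
      2 * #G.edgeFinset + G.degree u ^ 2 := by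
  set N := G.neighborFinset u
  have hcount : ∑ v ∈ N, G.degree v = ∑ w, #{v ∈ N | G.Adj v w} := by
    simp_rw [← card_neighborFinset_eq_degree, neighborFinset_eq_filter]
    exact sum_card_bipartiteAbove_eq_sum_card_bipartiteBelow _
  have hinside : ∑ w ∈ N, (#{v ∈ N | G.Adj v w} + 1) ≤ #N * #N :=
    (sum_le_card_nsmul _ _ _ fun w hw => card_lt_card
      (show {v ∈ N | G.Adj v w} ⊂ N from filter_ssubset.2 ⟨w, hw, G.irrefl⟩)).trans_eq
        (smul_eq_mul _ _)
  rw [sum_add_distrib, sum_const, smul_eq_mul, mul_one] at hinside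
  have houtside : ∑ w ∈ Nᶜ, #{v ∈ N | G.Adj v w} ≤ ∑ w ∈ Nᶜ, G.degree w := by
    refine sum_le_sum fun w _ => ?_
    rw [← card_neighborFinset_eq_degree, neighborFinset_eq_filter]
    exact card_le_card (filter_subset_filter _ (subset_univ N)) |>.trans_eq
      (by simp_rw [G.adj_comm])
  have htotal : ∑ v ∈ N, G.degree v + ∑ w ∈ Nᶜ, G.degree w = 2 * #G.edgeFinset := by
    rw [sum_add_sum_compl, sum_degrees_eq_twice_card_edges]
  rw [← sum_add_sum_compl N] at hcount
  change _ + #N ≤ _ + #N ^ 2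
  rw [sq]
  omega

theorem sq_degree_add_sum_degree_neighborFinset_le (u : V) :
    (G.degree u : ℝ) ^ 2 + ∑ v ∈ G.neighborFinset u, (G.degree v : ℝ) ≤
      (2 * #G.edgeFinset / ((Fintype.card V : ℝ) - 1) + Fintype.card V - 2) * G.degree u := by
  obtain hdeg | hdeg := (G.degree u).eq_zero_or_pos
  · rw [← card_neighborFinset_eq_degree, card_eq_zero] at hdeg
    simp [← card_neighborFinset_eq_degree, hdeg]
  have hcard := G.degree_lt_card_verts u
  have hint := Int.sub_one_mul_sq_add_le (n := Fintype.card V) (t := G.degree u)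
    (S := ((∑ v ∈ G.neighborFinset u, G.degree v : ℕ) : ℤ)) (m := #G.edgeFinset)
    (by exact_mod_cast hdeg) (by exact_mod_cast hcard) (Nat.cast_nonneg _)
    (by exact_mod_cast G.sum_degree_neighborFinset_add_degree_le_mul u)
    (by exact_mod_cast G.sum_degree_neighborFinset_add_degree_le u)
    (by exact_mod_cast G.two_mul_sum_degree_neighborFinset_add_degree_le u)
  have hN : (0 : ℝ) < Fintype.card V - 1 := by
    rw [sub_pos, Nat.one_lt_cast]
    omega
  rw [← mul_le_mul_iff_right₀ hN]
  calc ((Fintype.card V : ℝ) - 1) *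
        ((G.degree u : ℝ) ^ 2 + ∑ v ∈ G.neighborFinset u, (G.degree v : ℝ))
      ≤ G.degree u *
        (2 * #G.edgeFinset + ((Fintype.card V : ℝ) - 2) * (Fintype.card V - 1)) := by
        exact_mod_cast hint
    _ = _ := by
        field_simp
        ring

end SimpleGraph

section signlessLaplacian

open Matrix

variable {n : ℕ} (G : SimpleGraph (Fin n)) [DecidableRel G.Adj]

theorem signlessLaplacian_nonneg (i j : Fin n) : 0 ≤ signlessLaplacian G i j := by
  unfold signlessLaplacian
  rw [Matrix.add_apply, Matrix.diagonal_apply, SimpleGraph.adjMatrix_apply]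
  split_ifs <;> positivity

theorem signlessLaplacian_transpose : (signlessLaplacian G)ᵀ = signlessLaplacian G := by
  simp [signlessLaplacian, Matrix.transpose_add, SimpleGraph.transpose_adjMatrix]

theorem signlessLaplacian_mulVec_apply (x : Fin n → ℝ) (i : Fin n) :
    (signlessLaplacian G *ᵥ x) i = G.degree i * x i + ∑ j ∈ G.neighborFinset i, x j := by
  simp [signlessLaplacian, Matrix.add_mulVec, Matrix.mulVec_diagonal,
    SimpleGraph.adjMatrix_mulVec_apply]

theorem signlessLaplacian_mulVec_eq_zero {x : Fin n → ℝ}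
    (hx : (fun i => (G.degree i : ℝ)) ⬝ᵥ |x| = 0) : signlessLaplacian G *ᵥ x = 0 := by
  have hsupp (i : Fin n) : G.degree i = 0 ∨ x i = 0 := by
    have hterm := sum_eq_zero_iff_of_nonneg (s := univ)
      (fun j _ => mul_nonneg (Nat.cast_nonneg (G.degree j)) (abs_nonneg (x j)))
    exact (mul_eq_zero.1 (hterm.1 hx i (mem_univ i))).imp Nat.cast_eq_zero.1 abs_eq_zero.1
  ext i
  have hnbr : ∑ j ∈ G.neighborFinset i, x j = 0 := sum_eq_zero fun j hj => by
    refine (hsupp j).resolve_left (Nat.pos_iff_ne_zero.1 ?_)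
    exact (G.degree_pos_iff_exists_adj j).2 ⟨i, ((G.mem_neighborFinset i j).1 hj).symm⟩
  rcases hsupp i with h | h <;> simp [signlessLaplacian_mulVec_apply, h, hnbr]

theorem degree_vecMul_signlessLaplacian_le :
    (fun i => (G.degree i : ℝ)) ᵥ* signlessLaplacian G ≤
      (2 * (G.edgeFinset.card : ℝ) / ((n : ℝ) - 1) + (n : ℝ) - 2) •
        fun i => (G.degree i : ℝ) := by
  intro j
  rw [← Matrix.mulVec_transpose, signlessLaplacian_transpose, signlessLaplacian_mulVec_apply]
  simpa [sq] using G.sq_degree_add_sum_degree_neighborFinset_le j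

end signlessLaplacian

theorem stmt4 {n : ℕ} (hn : 2 ≤ n) (G : SimpleGraph (Fin n)) [DecidableRel G.Adj] :
    qIndex G ≤ 2 * (G.edgeFinset.card : ℝ) / ((n : ℝ) - 1) + (n : ℝ) - 2 := by
  have hn' : (2 : ℝ) ≤ n := by exact_mod_cast hn
  have hK : 0 ≤ 2 * (G.edgeFinset.card : ℝ) / ((n : ℝ) - 1) + (n : ℝ) - 2 := by
    have : 0 ≤ 2 * (G.edgeFinset.card : ℝ) / ((n : ℝ) - 1) :=
      div_nonneg (by positivity) (by linarith)
    linarith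
  refine Real.sSup_le (fun μ hμ => ?_) hK
  obtain ⟨v, hv0, hv⟩ := Matrix.exists_mulVec_eq_smul_of_mem_spectrum hμ
  have hd : (0 : Fin n → ℝ) ≤ fun i => (G.degree i : ℝ) := fun i => Nat.cast_nonneg _
  obtain h0 | hpos := (dotProduct_nonneg_of_nonneg hd (abs_nonneg v)).eq_or_lt
  · have hμv : μ • v = 0 := hv ▸ signlessLaplacian_mulVec_eq_zero G h0.symm
    rw [(smul_eq_zero.1 hμv).resolve_right hv0]
    exact hK
  · exact (le_abs_self μ).trans <| Matrix.abs_le_of_vecMul_le_smul (signlessLaplacian_nonneg G) hd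
      (degree_vecMul_signlessLaplacian_le G) hv hpos
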